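/- arXiv:2011.10458 — 4 statements merged into one kernel-verified Lean document; each statement's English description precedes it below -/
import Mathlib

section
/- Suppose a complex unit hypergraph is d-regular (every vertex has degree d > 0) and r-uniform (every edge has size r > 0). Then the normalized Laplacian of the dual hypergraph satisfies L(G*) = (d/r) · L*(G) and the dual normalized Laplacian of the dual hypergraph satisfies L*(G*) = (d/r) · L(G). -/
open Matrix

/-- Degree of vertex `i`: the number of edges `k` with `ω i k ≠ 0`. -/
noncomputable def deg {n m : ℕ} (ω : Fin n → Fin m → ℂ) (i : Fin n) : ℕ :=
  Nat.card {k : Fin m // ω i k ≠ 0}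

/-- Size of edge `k`: the number of vertices `i` with `ω i k ≠ 0`. -/
noncomputable def edgeSize {n m : ℕ} (ω : Fin n → Fin m → ℂ) (k : Fin m) : ℕ :=
  Nat.card {i : Fin n // ω i k ≠ 0}

/-- Incidence matrix of a complex unit hypergraph. -/
noncomputable def incM {n m : ℕ} (ω : Fin n → Fin m → ℂ) : Matrix (Fin n) (Fin m) ℂ :=
  Matrix.of ω

/-- Degree matrix. -/
noncomputable def degM {n m : ℕ} (ω : Fin n → Fin m → ℂ) : Matrix (Fin n) (Fin n) ℂ :=
  Matrix.diagonal fun i => (deg ω i : ℂ)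

/-- Normalized Laplacian `L = D⁻¹ B Bᴴ`. -/
noncomputable def normLap {n m : ℕ} (ω : Fin n → Fin m → ℂ) : Matrix (Fin n) (Fin n) ℂ :=
  (degM ω)⁻¹ * (incM ω * (incM ω)ᴴ)

/-- Dual normalized Laplacian `L* = Bᴴ D⁻¹ B`. -/
noncomputable def dualNormLap {n m : ℕ} (ω : Fin n → Fin m → ℂ) :
    Matrix (Fin m) (Fin m) ℂ :=
  (incM ω)ᴴ * (degM ω)⁻¹ * incM ω

/-- Incidence function of the dual hypergraph: `ω*(k, i) = conj (ω i k)`. -/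
noncomputable def dualOmega {n m : ℕ} (ω : Fin n → Fin m → ℂ) :
    Fin m → Fin n → ℂ :=
  fun k i => (starRingEnd ℂ) (ω i k)

section

variable {n m : ℕ} (ω : Fin n → Fin m → ℂ)

theorem incM_dualOmega : incM (dualOmega ω) = (incM ω)ᴴ := by
  ext k i
  simp [incM, dualOmega, conjTranspose_apply]

theorem deg_dualOmega (k : Fin m) : deg (dualOmega ω) k = edgeSize ω k :=
  Nat.card_congr <| Equiv.subtypeEquivRight fun i => by simp [dualOmega]

variable {ω}

theorem degM_of_forall_deg_eq {d : ℕ} (hreg : ∀ i, deg ω i = d) :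
    degM ω = (d : ℂ) • 1 := by
  simp only [degM, hreg, smul_one_eq_diagonal]

theorem inv_degM_of_forall_deg_eq {d : ℕ} (hd : 0 < d) (hreg : ∀ i, deg ω i = d) :
    (degM ω)⁻¹ = (d : ℂ)⁻¹ • 1 := by
  have hd' : (d : ℂ) ≠ 0 := by exact_mod_cast hd.ne'
  rw [degM_of_forall_deg_eq hreg]
  exact inv_eq_right_inv (by rw [smul_mul_smul, mul_one, mul_inv_cancel₀ hd', one_smul])

theorem normLap_of_forall_deg_eq {d : ℕ} (hd : 0 < d) (hreg : ∀ i, deg ω i = d) :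
    normLap ω = (d : ℂ)⁻¹ • (incM ω * (incM ω)ᴴ) := by
  rw [normLap, inv_degM_of_forall_deg_eq hd hreg, smul_mul, one_mul]

theorem dualNormLap_of_forall_deg_eq {d : ℕ} (hd : 0 < d) (hreg : ∀ i, deg ω i = d) :
    dualNormLap ω = (d : ℂ)⁻¹ • ((incM ω)ᴴ * incM ω) := by
  rw [dualNormLap, inv_degM_of_forall_deg_eq hd hreg, Matrix.mul_smul, Matrix.mul_one, smul_mul]

theorem normLap_dualOmega_of_forall_edgeSize_eq {r : ℕ} (hr : 0 < r)
    (hunif : ∀ k, edgeSize ω k = r) :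
    normLap (dualOmega ω) = (r : ℂ)⁻¹ • ((incM ω)ᴴ * incM ω) := by
  rw [normLap_of_forall_deg_eq hr (fun k => (deg_dualOmega ω k).trans (hunif k)),
    incM_dualOmega, conjTranspose_conjTranspose]

theorem dualNormLap_dualOmega_of_forall_edgeSize_eq {r : ℕ} (hr : 0 < r)
    (hunif : ∀ k, edgeSize ω k = r) :
    dualNormLap (dualOmega ω) = (r : ℂ)⁻¹ • (incM ω * (incM ω)ᴴ) := by
  rw [dualNormLap_of_forall_deg_eq hr (fun k => (deg_dualOmega ω k).trans (hunif k)),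
    incM_dualOmega, conjTranspose_conjTranspose]

end

theorem stmt6_general (n m : ℕ) (ω : Fin n → Fin m → ℂ)
    (d r : ℕ) (hd : 0 < d) (hr : 0 < r)
    (hreg : ∀ i, deg ω i = d) (hunif : ∀ k, edgeSize ω k = r) :
    normLap (dualOmega ω) = ((d : ℂ) / (r : ℂ)) • dualNormLap ω ∧
    dualNormLap (dualOmega ω) = ((d : ℂ) / (r : ℂ)) • normLap ω := by
  have hscale : (d : ℂ) / r * (d : ℂ)⁻¹ = (r : ℂ)⁻¹ := by
    rw [div_eq_mul_inv, mul_right_comm, mul_inv_cancel₀ (by exact_mod_cast hd.ne')]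
    exact one_mul _
  rw [normLap_dualOmega_of_forall_edgeSize_eq hr hunif, dualNormLap_of_forall_deg_eq hd hreg,
    dualNormLap_dualOmega_of_forall_edgeSize_eq hr hunif, normLap_of_forall_deg_eq hd hreg,
    smul_smul, smul_smul, hscale]
  exact ⟨rfl, rfl⟩

/-- If `G` is `d`-regular and `r`-uniform (with `d, r > 0`), then
`L(G*) = (d/r) • L*(G)` and `L*(G*) = (d/r) • L(G)`. -/
theorem stmt6 (n m : ℕ) (ω : Fin n → Fin m → ℂ)
    (hω : ∀ i k, ω i k = 0 ∨ ‖ω i k‖ = 1)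
    (d r : ℕ) (hd : 0 < d) (hr : 0 < r)
    (hreg : ∀ i, deg ω i = d) (hunif : ∀ k, edgeSize ω k = r) :
    normLap (dualOmega ω) = ((d : ℂ) / (r : ℂ)) • dualNormLap ω ∧
    dualNormLap (dualOmega ω) = ((d : ℂ) / (r : ℂ)) • normLap ω :=
  stmt6_general n m ω d r hd hr hreg hunif
end

section
/- Let G be a complex unit hypergraph on n vertices and m edges, and let Ĝ be obtained from G by weakly deleting r edges, i.e., restricting ω to a subset F of m - r edges, so that K(Ĝ) = B_F (B_F)ᴴ where B_F consists of the columns of B indexed by F. Then λ_j(K(Ĝ)) ≤ λ_j(K(G)) for all j ∈ {1, …, n}, and λ_{j-r}(K(G)) ≤ λ_j(K(Ĝ)) for all j ∈ {r+1, …, n}. -/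
/-!
The quadratic form of `K = B Bᴴ` is `x ↦ ‖Bᴴ x‖² = ∑ₖ |(Bᴴ x)ₖ|²`. Weak deletion only drops the
terms with `k ∉ F`, so the form of `K(Ĝ)` is below that of `K(G)` everywhere and equals it on the
subspace `W = {x | (Bᴴ x)ₖ = 0 for k ∉ F}`, of codimension at most `r`. Both inequalities are then
instances of one Courant–Fischer comparison: if `x ↦ ⟪x, A x⟫` is below `x ↦ ⟪x, K x⟫` on a
subspace of codimension `r`, then `λᵢ(A) ≤ λⱼ(K)` whenever `i + r ≤ j`, because that subspace,
the span of the first `j + 1` eigenvectors of `K` and the orthogonal complement of the first `i`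
eigenvectors of `A` have a nonzero vector in common.
-/

open Matrix

/-- The eigenvalues of a Hermitian matrix, listed with multiplicity in
nondecreasing order. -/
noncomputable def sortedEigs {N : ℕ} {M : Matrix (Fin N) (Fin N) ℂ}
    (h : M.IsHermitian) : Fin N → ℝ :=
  h.eigenvalues ∘ Tuple.sort h.eigenvalues

open Module
open scoped InnerProductSpace

section Dimension

variable {K V : Type*} [Field K] [AddCommGroup V] [Module K V] [FiniteDimensional K V]

theorem finrank_sub_card_le_finrank_iInf_ker {ι : Type*} (s : Finset ι) (φ : ι → V →ₗ[K] K) :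
    finrank K V - s.card ≤ finrank K ↥(⨅ i ∈ s, LinearMap.ker (φ i)) := by
  let Φ : V →ₗ[K] s → K := LinearMap.pi fun i => φ i
  have hker : (⨅ i ∈ s, LinearMap.ker (φ i)) = LinearMap.ker Φ := by
    rw [LinearMap.ker_pi, iInf_subtype']
  have hrank := LinearMap.finrank_range_add_finrank_ker Φ
  have hrange := (LinearMap.range Φ).finrank_le
  rw [Module.finrank_fintype_fun_eq_card, Fintype.card_coe] at hrange
  rw [hker]
  omega

theorem Submodule.finrank_add_finrank_le_finrank_inf_add (s t : Submodule K V) :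
    finrank K s + finrank K t ≤ finrank K ↥(s ⊓ t) + finrank K V := by
  rw [← Submodule.finrank_sup_add_finrank_inf_eq, add_comm]
  exact Nat.add_le_add_left (Submodule.finrank_le _) _

end Dimension

section SortedSpectrum

variable {N : ℕ} {M : Matrix (Fin N) (Fin N) ℂ} (hM : M.IsHermitian)

noncomputable def sortedEigenbasis : OrthonormalBasis (Fin N) ℂ (EuclideanSpace ℂ (Fin N)) :=
  hM.eigenvectorBasis.reindex (Tuple.sort hM.eigenvalues).symm

theorem toEuclideanLin_sortedEigenbasis (i : Fin N) :
    toEuclideanLin M (sortedEigenbasis hM i) = (sortedEigs hM i : ℂ) • sortedEigenbasis hM i := by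
  simp only [sortedEigenbasis, OrthonormalBasis.reindex_apply, Equiv.symm_symm]
  rw [toLpLin_apply, hM.mulVec_eigenvectorBasis]
  rfl

theorem re_inner_toEuclideanLin_eq_sum_sortedEigs (x : EuclideanSpace ℂ (Fin N)) :
    RCLike.re ⟪x, toEuclideanLin M x⟫_ℂ =
      ∑ i, sortedEigs hM i * ‖⟪sortedEigenbasis hM i, x⟫_ℂ‖ ^ 2 := by
  rw [← (sortedEigenbasis hM).sum_inner_mul_inner, map_sum]
  refine Finset.sum_congr rfl fun i _ => ?_
  rw [← isSymmetric_toEuclideanLin_iff.mpr hM, toEuclideanLin_sortedEigenbasis, inner_smul_left,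
    ← inner_conj_symm x, Complex.conj_ofReal, mul_left_comm, Complex.conj_mul']
  norm_cast

theorem sortedEigs_mul_norm_sq_le_re_inner {j : Fin N} {x : EuclideanSpace ℂ (Fin N)}
    (hx : ∀ i < j, ⟪sortedEigenbasis hM i, x⟫_ℂ = 0) :
    sortedEigs hM j * ‖x‖ ^ 2 ≤ RCLike.re ⟪x, toEuclideanLin M x⟫_ℂ := by
  rw [re_inner_toEuclideanLin_eq_sum_sortedEigs, ← (sortedEigenbasis hM).sum_sq_norm_inner_right,
    Finset.mul_sum]
  refine Finset.sum_le_sum fun i _ => ?_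
  rcases lt_or_ge i j with hij | hji
  · simp [hx i hij]
  · exact mul_le_mul_of_nonneg_right (Tuple.monotone_sort _ hji) (by positivity)

theorem re_inner_le_sortedEigs_mul_norm_sq {j : Fin N} {x : EuclideanSpace ℂ (Fin N)}
    (hx : ∀ i > j, ⟪sortedEigenbasis hM i, x⟫_ℂ = 0) :
    RCLike.re ⟪x, toEuclideanLin M x⟫_ℂ ≤ sortedEigs hM j * ‖x‖ ^ 2 := by
  rw [re_inner_toEuclideanLin_eq_sum_sortedEigs, ← (sortedEigenbasis hM).sum_sq_norm_inner_right,
    Finset.mul_sum]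
  refine Finset.sum_le_sum fun i _ => ?_
  rcases le_or_gt i j with hij | hji
  · exact mul_le_mul_of_nonneg_right (Tuple.monotone_sort _ hij) (by positivity)
  · simp [hx i hji]

end SortedSpectrum

theorem sortedEigs_le_sortedEigs_of_re_inner_le {N r : ℕ} {A K : Matrix (Fin N) (Fin N) ℂ}
    (hA : A.IsHermitian) (hK : K.IsHermitian) {W : Submodule ℂ (EuclideanSpace ℂ (Fin N))}
    (hW : N - r ≤ finrank ℂ W)
    (hAK : ∀ x ∈ W, RCLike.re ⟪x, toEuclideanLin A x⟫_ℂ ≤ RCLike.re ⟪x, toEuclideanLin K x⟫_ℂ)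
    {i j : Fin N} (hij : (i : ℕ) + r ≤ j) : sortedEigs hA i ≤ sortedEigs hK j := by
  set L := ⨅ l ∈ Finset.Iio i, LinearMap.ker (innerₛₗ ℂ (sortedEigenbasis hA l))
  set U := ⨅ l ∈ Finset.Ioi j, LinearMap.ker (innerₛₗ ℂ (sortedEigenbasis hK l))
  have hL : N - i ≤ finrank ℂ L := by
    simpa using finrank_sub_card_le_finrank_iInf_ker (Finset.Iio i)
      fun l => innerₛₗ ℂ (sortedEigenbasis hA l)
  have hU : N - (N - 1 - j) ≤ finrank ℂ U := by
    simpa using finrank_sub_card_le_finrank_iInf_ker (Finset.Ioi j)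
      fun l => innerₛₗ ℂ (sortedEigenbasis hK l)
  have hLU := L.finrank_add_finrank_le_finrank_inf_add U
  have hLUW := (L ⊓ U).finrank_add_finrank_le_finrank_inf_add W
  rw [finrank_euclideanSpace_fin] at hLU hLUW
  obtain ⟨x, ⟨⟨hxL, hxU⟩, hxW⟩, hx0⟩ : ∃ x ∈ L ⊓ U ⊓ W, x ≠ 0 := by
    refine Submodule.exists_mem_ne_zero_of_ne_bot fun h => ?_
    rw [h, finrank_bot] at hLUW
    have := j.isLt
    omega
  simp only [L, U, SetLike.mem_coe, Submodule.mem_iInf, Finset.mem_Iio, Finset.mem_Ioi,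
    LinearMap.mem_ker, coe_innerₛₗ_apply] at hxL hxU
  refine le_of_mul_le_mul_right ?_ (by positivity : 0 < ‖x‖ ^ 2)
  calc sortedEigs hA i * ‖x‖ ^ 2 ≤ RCLike.re ⟪x, toEuclideanLin A x⟫_ℂ :=
        sortedEigs_mul_norm_sq_le_re_inner hA hxL
    _ ≤ RCLike.re ⟪x, toEuclideanLin K x⟫_ℂ := hAK x hxW
    _ ≤ sortedEigs hK j * ‖x‖ ^ 2 := re_inner_le_sortedEigs_mul_norm_sq hK hxU

section ColumnSubmatrix

variable {𝕜 n m m' : Type*} [RCLike 𝕜] [Fintype n] [DecidableEq n]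

theorem re_inner_toEuclideanLin_mul_conjTranspose_self [Fintype m] [DecidableEq m]
    (B : Matrix n m 𝕜) (x : EuclideanSpace 𝕜 n) :
    RCLike.re ⟪x, toEuclideanLin (B * Bᴴ) x⟫_𝕜 = ∑ k, ‖toEuclideanLin Bᴴ x k‖ ^ 2 := by
  rw [toLpLin_mul, LinearMap.comp_apply, toEuclideanLin_conjTranspose_eq_adjoint,
    ← LinearMap.adjoint_inner_left, inner_self_eq_norm_sq, EuclideanSpace.norm_sq_eq]

variable [Fintype m'] [DecidableEq m']

theorem re_inner_toEuclideanLin_submatrix_mul_conjTranspose (B : Matrix n m 𝕜) (f : m' → m)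
    (x : EuclideanSpace 𝕜 n) :
    RCLike.re ⟪x, toEuclideanLin (B.submatrix id f * (B.submatrix id f)ᴴ) x⟫_𝕜 =
      ∑ k, ‖toEuclideanLin Bᴴ x (f k)‖ ^ 2 := by
  rw [re_inner_toEuclideanLin_mul_conjTranspose_self]
  simp [toLpLin_apply, conjTranspose_submatrix, mulVec, dotProduct]

theorem re_inner_toEuclideanLin_submatrix_le [Fintype m] [DecidableEq m] (B : Matrix n m 𝕜)
    {f : m' → m} (hf : f.Injective) (x : EuclideanSpace 𝕜 n) :
    RCLike.re ⟪x, toEuclideanLin (B.submatrix id f * (B.submatrix id f)ᴴ) x⟫_𝕜 ≤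
      RCLike.re ⟪x, toEuclideanLin (B * Bᴴ) x⟫_𝕜 := by
  rw [re_inner_toEuclideanLin_submatrix_mul_conjTranspose,
    re_inner_toEuclideanLin_mul_conjTranspose_self,
    ← Finset.sum_image (f := fun k => ‖toEuclideanLin Bᴴ x k‖ ^ 2) fun _ _ _ _ h => hf h]
  exact Finset.sum_le_sum_of_subset_of_nonneg (Finset.subset_univ _) fun _ _ _ => by positivity

theorem re_inner_toEuclideanLin_submatrix_eq [Fintype m] [DecidableEq m] (B : Matrix n m 𝕜)
    {f : m' → m} (hf : f.Injective) {x : EuclideanSpace 𝕜 n}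
    (hx : ∀ k ∉ Set.range f, toEuclideanLin Bᴴ x k = 0) :
    RCLike.re ⟪x, toEuclideanLin (B.submatrix id f * (B.submatrix id f)ᴴ) x⟫_𝕜 =
      RCLike.re ⟪x, toEuclideanLin (B * Bᴴ) x⟫_𝕜 := by
  rw [re_inner_toEuclideanLin_submatrix_mul_conjTranspose,
    re_inner_toEuclideanLin_mul_conjTranspose_self]
  exact Fintype.sum_of_injective f hf _ _ (fun k hk => by simp [hx k hk]) fun _ => rfl

end ColumnSubmatrix

/-- Indices are 0-based, and the kept edges `F` are the range of the injection `f`. -/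
theorem stmt8 (n m r : ℕ) (hr : r ≤ m) (ω : Fin n → Fin m → ℂ)
    (f : Fin (m - r) → Fin m) (hf : Function.Injective f) :
    (∀ (j : ℕ) (hj : j < n),
      sortedEigs (Matrix.isHermitian_mul_conjTranspose_self
          (incM fun i k => ω i (f k))) ⟨j, hj⟩ ≤
        sortedEigs (Matrix.isHermitian_mul_conjTranspose_self (incM ω)) ⟨j, hj⟩) ∧
    (∀ (j : ℕ) (hj : j < n), r ≤ j →
      sortedEigs (Matrix.isHermitian_mul_conjTranspose_self (incM ω)) ⟨j - r, by omega⟩ ≤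
        sortedEigs (Matrix.isHermitian_mul_conjTranspose_self
          (incM fun i k => ω i (f k))) ⟨j, hj⟩) := by
  set B := incM ω
  refine ⟨fun j hj => ?_, fun j hj hrj => ?_⟩
  · exact sortedEigs_le_sortedEigs_of_re_inner_le _ _ (W := ⊤) (r := 0) (by simp)
      (fun x _ => re_inner_toEuclideanLin_submatrix_le B hf x) le_rfl
  · let W := ⨅ k ∈ (Finset.univ.image f)ᶜ,
      LinearMap.ker ((EuclideanSpace.proj k).toLinearMap ∘ₗ toEuclideanLin Bᴴ)
    have hW : n - r ≤ finrank ℂ W := by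
      have := finrank_sub_card_le_finrank_iInf_ker (Finset.univ.image f)ᶜ
        fun k => (EuclideanSpace.proj k).toLinearMap ∘ₗ toEuclideanLin Bᴴ
      rwa [Finset.card_compl, Finset.card_image_of_injective _ hf, Finset.card_univ,
        Fintype.card_fin, Fintype.card_fin, finrank_euclideanSpace_fin,
        Nat.sub_sub_self hr] at this
    refine sortedEigs_le_sortedEigs_of_re_inner_le _ _ hW (fun x hx => ?_)
      (Nat.sub_add_cancel hrj).le
    simp only [W, Submodule.mem_iInf, Finset.mem_compl, Finset.mem_image, Finset.mem_univ,
      true_and, LinearMap.mem_ker] at hx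
    exact (re_inner_toEuclideanLin_submatrix_eq B hf hx).ge
end

section
/- Let Δ be the maximum vertex degree and ∇ the maximum edge size of a complex unit hypergraph with n ≥ 1 vertices. Then every eigenvalue λ of the adjacency matrix A satisfies |λ| ≤ Δ · (∇ - 1); i.e., the spectral radius ρ(A) ≤ Δ(∇ - 1). -/
open Matrix

/-- Adjacency matrix. -/
noncomputable def adjM {n m : ℕ} (ω : Fin n → Fin m → ℂ) : Matrix (Fin n) (Fin n) ℂ :=
  Matrix.of fun i j => if i = j then 0 else -∑ k, ω i k * (starRingEnd ℂ) (ω j k)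

/-!
Gershgorin's theorem bounds every eigenvalue of a Hermitian matrix by its largest absolute row
sum. In row `i` of the adjacency matrix, every edge `e` at `i` contributes at most one unit for
each of the other `|e| - 1 ≤ ∇ - 1` vertices of `e`, and there are `deg(i) ≤ Δ` such edges.
-/

open Finset

theorem Matrix.IsHermitian.abs_eigenvalues_le_of_sum_norm_row_le {𝕜 ι : Type*} [RCLike 𝕜]
    [Fintype ι] [DecidableEq ι] {A : Matrix ι ι 𝕜} (hA : A.IsHermitian) {c : ℝ}
    (hc : ∀ k, ∑ j, ‖A k j‖ ≤ c) (i : ι) : |hA.eigenvalues i| ≤ c := by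
  have hμ : Module.End.HasEigenvalue (toLin' A) (hA.eigenvalues i : 𝕜) := by
    rw [Module.End.hasEigenvalue_iff_mem_spectrum, spectrum_toLin', ← RCLike.algebraMap_eq_ofReal,
      spectrum.algebraMap_mem_iff]
    exact hA.eigenvalues_mem_spectrum_real i
  obtain ⟨k, hk⟩ := eigenvalue_mem_ball hμ
  rw [mem_closedBall_iff_norm] at hk
  calc |hA.eigenvalues i| = ‖(hA.eigenvalues i : 𝕜)‖ := (RCLike.norm_ofReal _).symm
    _ ≤ ‖A k k‖ + ‖(hA.eigenvalues i : 𝕜) - A k k‖ := norm_le_norm_add_norm_sub' _ _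
    _ ≤ ‖A k k‖ + ∑ j ∈ univ.erase k, ‖A k j‖ := by gcongr
    _ = ∑ j, ‖A k j‖ := add_sum_erase _ (fun j => ‖A k j‖) (mem_univ k)
    _ ≤ c := hc k

section Hypergraph

variable {n m : ℕ}

theorem sum_norm_adjM_row_le (ω : Fin n → Fin m → ℂ) (i : Fin n) :
    ∑ j, ‖adjM ω i j‖ ≤ ∑ e, ‖ω i e‖ * (∑ j, ‖ω j e‖ - ‖ω i e‖) := by
  have hdiag : ‖adjM ω i i‖ = 0 := by simp [adjM]
  calc ∑ j, ‖adjM ω i j‖ = ∑ j ∈ univ.erase i, ‖adjM ω i j‖ :=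
        (sum_erase univ (f := fun j => ‖adjM ω i j‖) hdiag).symm
    _ ≤ ∑ j ∈ univ.erase i, ∑ e, ‖ω i e‖ * ‖ω j e‖ := by
      refine sum_le_sum fun j hj => ?_
      rw [adjM, of_apply, if_neg (ne_of_mem_erase hj).symm, norm_neg]
      refine (norm_sum_le _ _).trans_eq (sum_congr rfl fun e _ => ?_)
      rw [norm_mul, RCLike.norm_conj]
    _ = ∑ e, ‖ω i e‖ * ∑ j ∈ univ.erase i, ‖ω j e‖ := by
      rw [sum_comm]
      simp only [mul_sum]
    _ = ∑ e, ‖ω i e‖ * (∑ j, ‖ω j e‖ - ‖ω i e‖) := by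
      simp only [sum_erase_eq_sub (mem_univ i)]

theorem one_le_sup_edgeSize {ω : Fin n → Fin m → ℂ} (h : 0 < univ.sup (deg ω)) :
    1 ≤ univ.sup (edgeSize ω) := by
  obtain ⟨i, -, hi⟩ := Finset.lt_sup_iff.mp h
  obtain ⟨⟨e, he⟩⟩ := (Nat.card_pos_iff.mp hi).1
  have : 0 < edgeSize ω e := Nat.card_pos_iff.mpr ⟨⟨⟨i, he⟩⟩, inferInstance⟩
  exact this.trans_le (le_sup (mem_univ e))

-- `∇ - 1` is negative only when there are no incidences at all, and then `Δ = 0` as well.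
theorem deg_mul_le_sup_deg_mul (ω : Fin n → Fin m → ℂ) (i : Fin n) :
    (deg ω i : ℝ) * ((univ.sup (edgeSize ω) : ℕ) - 1 : ℝ) ≤
      (univ.sup (deg ω) : ℕ) * ((univ.sup (edgeSize ω) : ℕ) - 1 : ℝ) := by
  have hdeg : deg ω i ≤ univ.sup (deg ω) := le_sup (mem_univ i)
  rcases Nat.eq_zero_or_pos (univ.sup (deg ω)) with h | h
  · simp [h, Nat.le_zero.mp (h ▸ hdeg)]
  · have : (1 : ℝ) ≤ (univ.sup (edgeSize ω) : ℕ) := by exact_mod_cast one_le_sup_edgeSize h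
    gcongr

section UnitIncidence

variable {ω : Fin n → Fin m → ℂ} (hω : ∀ i k, ω i k = 0 ∨ ‖ω i k‖ = 1)
include hω

theorem norm_incidence_eq_ite (i : Fin n) (e : Fin m) :
    ‖ω i e‖ = if ω i e = 0 then 0 else 1 := by
  rcases hω i e with h | h
  · simp [h]
  · rw [h, if_neg (norm_ne_zero_iff.mp (h ▸ one_ne_zero))]

theorem sum_norm_row_eq_deg (i : Fin n) : ∑ e, ‖ω i e‖ = deg ω i := by
  classical
  simp [norm_incidence_eq_ite hω, deg, Nat.card_eq_fintype_card, Fintype.card_subtype, sum_ite]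

theorem sum_norm_col_eq_edgeSize (e : Fin m) : ∑ i, ‖ω i e‖ = edgeSize ω e := by
  classical
  simp [norm_incidence_eq_ite hω, edgeSize, Nat.card_eq_fintype_card, Fintype.card_subtype,
    sum_ite]

theorem sum_norm_adjM_row_le_deg_mul (i : Fin n) :
    ∑ j, ‖adjM ω i j‖ ≤ deg ω i * ((univ.sup (edgeSize ω) : ℕ) - 1 : ℝ) := by
  refine (sum_norm_adjM_row_le ω i).trans ?_
  rw [← sum_norm_row_eq_deg hω, sum_mul]
  refine sum_le_sum fun e _ => ?_
  have hsize : (edgeSize ω e : ℝ) ≤ (univ.sup (edgeSize ω) : ℕ) := by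
    exact_mod_cast le_sup (mem_univ e)
  rw [sum_norm_col_eq_edgeSize hω, norm_incidence_eq_ite hω i e]
  split_ifs <;> linarith

end UnitIncidence

end Hypergraph

theorem stmt14_general (n m : ℕ) (ω : Fin n → Fin m → ℂ)
    (hω : ∀ i k, ω i k = 0 ∨ ‖ω i k‖ = 1)
    (hA : (adjM ω).IsHermitian) :
    ∀ i : Fin n, |hA.eigenvalues i| ≤
      ((Finset.univ.sup (deg ω) : ℕ) : ℝ) * (((Finset.univ.sup (edgeSize ω) : ℕ) : ℝ) - 1) :=
  hA.abs_eigenvalues_le_of_sum_norm_row_le fun k =>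
    (sum_norm_adjM_row_le_deg_mul hω k).trans (deg_mul_le_sup_deg_mul ω k)

/-- Every eigenvalue `λ` of the adjacency matrix satisfies `|λ| ≤ Δ(∇ - 1)`,
where `Δ` is the maximum degree and `∇` the maximum edge size. -/
theorem stmt14 (n m : ℕ) (hn : 0 < n) (ω : Fin n → Fin m → ℂ)
    (hω : ∀ i k, ω i k = 0 ∨ ‖ω i k‖ = 1)
    (hA : (adjM ω).IsHermitian) :
    ∀ i : Fin n, |hA.eigenvalues i| ≤
      ((Finset.univ.sup (deg ω) : ℕ) : ℝ) * (((Finset.univ.sup (edgeSize ω) : ℕ) : ℝ) - 1) :=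
  stmt14_general n m ω hω hA
end

section
/- Let S be a nonempty set of vertices of a complex unit hypergraph such that for each v ∈ S the value ω(v, e) is the same nonzero complex unit for all edges e incident to v. Then λ_min(K) ≤ (∑_{k} |e_k ∩ S|²) / |S| ≤ λ_max(K), and, if all degrees are positive, λ_min(L) ≤ (∑_{k} |e_k ∩ S|²) / vol(S) ≤ λ_max(L), where |e_k ∩ S| is the number of vertices of S incident to edge k and vol(S) = ∑_{v ∈ S} deg(v). -/
open Matrix

/-- The diagonal matrix `D^{-1/2}`. -/
noncomputable def degInvSqrt {n m : ℕ} (ω : Fin n → Fin m → ℂ) :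
    Matrix (Fin n) (Fin n) ℂ :=
  Matrix.diagonal fun i => (((Real.sqrt (deg ω i))⁻¹ : ℝ) : ℂ)

/-- The Hermitian normalized Laplacian `𝓛 = D^{-1/2} K D^{-1/2}`, whose eigenvalues are
by definition those of `L = D⁻¹ K`. -/
noncomputable def herLap {n m : ℕ} (ω : Fin n → Fin m → ℂ) : Matrix (Fin n) (Fin n) ℂ :=
  degInvSqrt ω * (incM ω * (incM ω)ᴴ) * degInvSqrt ω

/-- Smallest eigenvalue of a Hermitian matrix. -/
noncomputable def lamMin {N : ℕ} (hN : 0 < N) {M : Matrix (Fin N) (Fin N) ℂ}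
    (h : M.IsHermitian) : ℝ :=
  Finset.univ.inf' (Finset.univ_nonempty_iff.mpr ⟨⟨0, hN⟩⟩) h.eigenvalues

/-- Largest eigenvalue of a Hermitian matrix. -/
noncomputable def lamMax {N : ℕ} (hN : 0 < N) {M : Matrix (Fin N) (Fin N) ℂ}
    (h : M.IsHermitian) : ℝ :=
  Finset.univ.sup' (Finset.univ_nonempty_iff.mpr ⟨⟨0, hN⟩⟩) h.eigenvalues


/-
Rayleigh quotients. Every vertex `i ∈ S` carries a unit label `c i` equal to `ω i k` on all edges
incident to it, so for the test vector `x = c · 𝟙_S` each term `conj (ω i k) * x i` of `(Bᴴ x)_k`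
is `1` when `i ∈ e_k ∩ S` and `0` otherwise. Hence `xᴴ K x = ‖Bᴴ x‖² = ∑_k |e_k ∩ S|²` and
`xᴴ x = |S|`. For `𝓛 = D^{-1/2} K D^{-1/2}` take `y = D^{1/2} x`: then `yᴴ 𝓛 y = xᴴ K x` and
`yᴴ y = vol S`. The quotients lie between the extreme eigenvalues because `M - λ_min` and
`λ_max - M` have nonnegative spectrum, hence are positive semidefinite.
-/

section Rayleigh

open scoped ComplexOrder

variable {𝕜 ι : Type*} [RCLike 𝕜] [Fintype ι] [DecidableEq ι] {M : Matrix ι ι 𝕜}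

lemma Matrix.IsHermitian.posSemidef_sub_algebraMap (hM : M.IsHermitian) {c : ℝ}
    (hc : ∀ i, c ≤ hM.eigenvalues i) : (M - algebraMap 𝕜 _ c).PosSemidef := by
  refine posSemidef_iff_isHermitian_and_spectrum_nonneg.2
    ⟨hM.sub (IsSelfAdjoint.algebraMap _ (RCLike.conj_ofReal c)), ?_⟩
  rw [← spectrum.sub_singleton_eq, hM.spectrum_eq_image_range]
  rintro _ ⟨_, ⟨_, ⟨i, rfl⟩, rfl⟩, _, rfl, rfl⟩
  show 0 ≤ (hM.eigenvalues i : 𝕜) - c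
  rw [← RCLike.ofReal_sub, RCLike.ofReal_nonneg]
  exact sub_nonneg.2 (hc i)

lemma Matrix.IsHermitian.posSemidef_algebraMap_sub (hM : M.IsHermitian) {c : ℝ}
    (hc : ∀ i, hM.eigenvalues i ≤ c) : (algebraMap 𝕜 _ c - M).PosSemidef := by
  refine posSemidef_iff_isHermitian_and_spectrum_nonneg.2
    ⟨(IsSelfAdjoint.algebraMap _ (RCLike.conj_ofReal c)).sub hM, ?_⟩
  rw [← spectrum.singleton_sub_eq, hM.spectrum_eq_image_range]
  rintro _ ⟨_, rfl, _, ⟨_, ⟨i, rfl⟩, rfl⟩, rfl⟩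
  show 0 ≤ (c : 𝕜) - hM.eigenvalues i
  rw [← RCLike.ofReal_sub, RCLike.ofReal_nonneg]
  exact sub_nonneg.2 (hc i)

lemma re_dotProduct_algebraMap_mulVec (c : ℝ) (x : ι → 𝕜) :
    RCLike.re (star x ⬝ᵥ algebraMap 𝕜 (Matrix ι ι 𝕜) c *ᵥ x) =
      c * RCLike.re (star x ⬝ᵥ x) := by
  rw [Algebra.algebraMap_eq_smul_one, smul_mulVec, one_mulVec, dotProduct_smul, smul_eq_mul,
    RCLike.re_ofReal_mul]

lemma Matrix.IsHermitian.mul_re_dotProduct_le (hM : M.IsHermitian) {c : ℝ}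
    (hc : ∀ i, c ≤ hM.eigenvalues i) (x : ι → 𝕜) :
    c * RCLike.re (star x ⬝ᵥ x) ≤ RCLike.re (star x ⬝ᵥ M *ᵥ x) := by
  have := (hM.posSemidef_sub_algebraMap hc).re_dotProduct_nonneg x
  rwa [sub_mulVec, dotProduct_sub, map_sub, re_dotProduct_algebraMap_mulVec, sub_nonneg] at this

lemma Matrix.IsHermitian.re_dotProduct_le_mul (hM : M.IsHermitian) {c : ℝ}
    (hc : ∀ i, hM.eigenvalues i ≤ c) (x : ι → 𝕜) :
    RCLike.re (star x ⬝ᵥ M *ᵥ x) ≤ c * RCLike.re (star x ⬝ᵥ x) := by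
  have := (hM.posSemidef_algebraMap_sub hc).re_dotProduct_nonneg x
  rwa [sub_mulVec, dotProduct_sub, map_sub, re_dotProduct_algebraMap_mulVec, sub_nonneg] at this

end Rayleigh

lemma lamMin_le_div_le_lamMax {N : ℕ} (hN : 0 < N) {M : Matrix (Fin N) (Fin N) ℂ}
    (hM : M.IsHermitian) {x : Fin N → ℂ} (hx : 0 < (star x ⬝ᵥ x).re) :
    lamMin hN hM ≤ (star x ⬝ᵥ M *ᵥ x).re / (star x ⬝ᵥ x).re ∧
      (star x ⬝ᵥ M *ᵥ x).re / (star x ⬝ᵥ x).re ≤ lamMax hN hM := by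
  rw [le_div_iff₀ hx, div_le_iff₀ hx]
  exact ⟨hM.mul_re_dotProduct_le (fun i => Finset.inf'_le _ (Finset.mem_univ i)) x,
    hM.re_dotProduct_le_mul (fun i => Finset.le_sup' _ (Finset.mem_univ i)) x⟩

section QuadraticForm

variable {R ι : Type*} [CommSemiring R] [StarRing R] [Fintype ι]

lemma star_dotProduct_mul_conjTranspose_mulVec {κ : Type*} [Fintype κ] (A : Matrix ι κ R)
    (x : ι → R) : star x ⬝ᵥ (A * Aᴴ) *ᵥ x = star (Aᴴ *ᵥ x) ⬝ᵥ Aᴴ *ᵥ x := by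
  rw [← mulVec_mulVec, dotProduct_mulVec, star_mulVec, conjTranspose_conjTranspose]

lemma star_dotProduct_mul_mul_mulVec {D : Matrix ι ι R} (hD : D.IsHermitian) (K : Matrix ι ι R)
    (y : ι → R) : star y ⬝ᵥ (D * K * D) *ᵥ y = star (D *ᵥ y) ⬝ᵥ K *ᵥ D *ᵥ y := by
  rw [← mulVec_mulVec, ← mulVec_mulVec, dotProduct_mulVec, star_mulVec, hD.eq]

lemma star_indicator_dotProduct_indicator (S : Finset ι) (f : ι → R) :
    star ((S : Set ι).indicator f) ⬝ᵥ (S : Set ι).indicator f = ∑ i ∈ S, star (f i) * f i := by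
  classical
  simp +contextual [dotProduct, Set.indicator_apply, Finset.sum_ite_mem]

end QuadraticForm

lemma exists_unit_label {V E : Type*} {ω : V → E → ℂ} (hω : ∀ i k, ω i k = 0 ∨ ‖ω i k‖ = 1)
    {S : Set V} (hconst : ∀ i ∈ S, ∀ k k', ω i k ≠ 0 → ω i k' ≠ 0 → ω i k = ω i k') :
    ∃ c : V → ℂ, (∀ i, star (c i) * c i = 1) ∧ ∀ i ∈ S, ∀ k, ω i k ≠ 0 → ω i k = c i := by
  have (i : V) : ∃ z : ℂ, star z * z = 1 ∧ (i ∈ S → ∀ k, ω i k ≠ 0 → ω i k = z) := by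
    by_cases h : ∃ k, ω i k ≠ 0
    · obtain ⟨k₀, hk₀⟩ := h
      refine ⟨ω i k₀, ?_, fun hi k hk => hconst i hi k k₀ hk hk₀⟩
      rw [Complex.star_def, Complex.conj_mul', (hω i k₀).resolve_left hk₀]
      norm_num
    · exact ⟨1, by simp, fun _ k hk => absurd ⟨k, hk⟩ h⟩
  choose c hc_unit hc using this
  exact ⟨c, hc_unit, fun i hi => hc i hi⟩

section Hypergraph

variable {n m : ℕ} {ω : Fin n → Fin m → ℂ} {S : Finset (Fin n)}

lemma conjTranspose_incM_mulVec_indicator {c : Fin n → ℂ} (hc_unit : ∀ i, star (c i) * c i = 1)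
    (hc : ∀ i ∈ S, ∀ k, ω i k ≠ 0 → ω i k = c i) :
    (incM ω)ᴴ *ᵥ (S : Set (Fin n)).indicator c =
      fun k => (Nat.card {i : Fin n // i ∈ S ∧ ω i k ≠ 0} : ℂ) := by
  classical
  ext k
  have (i : Fin n) : star (ω i k) * (S : Set (Fin n)).indicator c i =
      if i ∈ S ∧ ω i k ≠ 0 then 1 else 0 := by
    by_cases hi : i ∈ S
    · by_cases hk : ω i k = 0
      · simp [hk]
      · rw [if_pos ⟨hi, hk⟩, Set.indicator_of_mem (Finset.mem_coe.2 hi), hc i hi k hk, hc_unit]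
    · simp [hi]
  simp only [mulVec, dotProduct, conjTranspose_apply, incM, of_apply, this, Finset.sum_boole,
    Nat.card_eq_fintype_card, Fintype.card_subtype]

lemma re_dotProduct_incM_mul_conjTranspose_mulVec_indicator {c : Fin n → ℂ}
    (hc_unit : ∀ i, star (c i) * c i = 1) (hc : ∀ i ∈ S, ∀ k, ω i k ≠ 0 → ω i k = c i) :
    (star ((S : Set (Fin n)).indicator c) ⬝ᵥ
        (incM ω * (incM ω)ᴴ) *ᵥ (S : Set (Fin n)).indicator c).re =
      ∑ k, (Nat.card {i : Fin n // i ∈ S ∧ ω i k ≠ 0} : ℝ) ^ 2 := by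
  rw [star_dotProduct_mul_conjTranspose_mulVec, conjTranspose_incM_mulVec_indicator hc_unit hc]
  simp [dotProduct, sq]

lemma isHermitian_degInvSqrt : (degInvSqrt ω).IsHermitian :=
  isHermitian_diagonal_of_self_adjoint _ (by ext; simp)

lemma degInvSqrt_mulVec_indicator (hdeg : ∀ i ∈ S, 0 < deg ω i) (f : Fin n → ℂ) :
    degInvSqrt ω *ᵥ (S : Set (Fin n)).indicator (fun i => (√(deg ω i : ℝ) : ℂ) * f i) =
      (S : Set (Fin n)).indicator f := by
  ext i
  by_cases hi : i ∈ S
  · have : √(deg ω i : ℝ) ≠ 0 := (Real.sqrt_pos.2 (Nat.cast_pos.2 (hdeg i hi))).ne'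
    simp [degInvSqrt, mulVec_diagonal, hi, this]
  · simp [degInvSqrt, mulVec_diagonal, hi]

end Hypergraph

/-- If every vertex of a nonempty set `S` has a constant incidence label over all edges
incident to it, then `λ_min(K) ≤ (∑_k |e_k ∩ S|²)/|S| ≤ λ_max(K)` and, when all degrees
are positive, `λ_min(L) ≤ (∑_k |e_k ∩ S|²)/vol(S) ≤ λ_max(L)`. -/
theorem stmt17 (n m : ℕ) (ω : Fin n → Fin m → ℂ)
    (hω : ∀ i k, ω i k = 0 ∨ ‖ω i k‖ = 1)
    (S : Finset (Fin n)) (hS : S.Nonempty)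
    (hconst : ∀ i ∈ S, ∀ k k' : Fin m, ω i k ≠ 0 → ω i k' ≠ 0 → ω i k = ω i k')
    (hL : (herLap ω).IsHermitian) :
    (lamMin (Fin.pos hS.choose)
        (Matrix.isHermitian_mul_conjTranspose_self (incM ω)) ≤
      (∑ k : Fin m, ((Nat.card {i : Fin n // i ∈ S ∧ ω i k ≠ 0} : ℝ)) ^ 2) /
        (S.card : ℝ) ∧
      (∑ k : Fin m, ((Nat.card {i : Fin n // i ∈ S ∧ ω i k ≠ 0} : ℝ)) ^ 2) /
        (S.card : ℝ) ≤
        lamMax (Fin.pos hS.choose)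
          (Matrix.isHermitian_mul_conjTranspose_self (incM ω))) ∧
    ((∀ i, 0 < deg ω i) →
      lamMin (Fin.pos hS.choose) hL ≤
        (∑ k : Fin m, ((Nat.card {i : Fin n // i ∈ S ∧ ω i k ≠ 0} : ℝ)) ^ 2) /
          (∑ i ∈ S, (deg ω i : ℝ)) ∧
      (∑ k : Fin m, ((Nat.card {i : Fin n // i ∈ S ∧ ω i k ≠ 0} : ℝ)) ^ 2) /
          (∑ i ∈ S, (deg ω i : ℝ)) ≤ lamMax (Fin.pos hS.choose) hL) := by
  obtain ⟨c, hc_unit, hc⟩ := exists_unit_label (S := (S : Set (Fin n))) hω hconst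
  set x := (S : Set (Fin n)).indicator c
  have hKx := re_dotProduct_incM_mul_conjTranspose_mulVec_indicator hc_unit hc
  have hx : (star x ⬝ᵥ x).re = S.card := by
    simp only [x, star_indicator_dotProduct_indicator, hc_unit, Finset.sum_const, nsmul_eq_mul,
      mul_one, Complex.natCast_re]
  refine ⟨?_, fun hdeg => ?_⟩
  · rw [← hKx, ← hx]
    exact lamMin_le_div_le_lamMax _ _ (hx ▸ Nat.cast_pos.2 hS.card_pos)
  · set y := (S : Set (Fin n)).indicator fun i => (√(deg ω i : ℝ) : ℂ) * c i
    have hLy : star y ⬝ᵥ herLap ω *ᵥ y = star x ⬝ᵥ (incM ω * (incM ω)ᴴ) *ᵥ x := by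
      rw [herLap, star_dotProduct_mul_mul_mulVec isHermitian_degInvSqrt,
        degInvSqrt_mulVec_indicator fun i _ => hdeg i]
    have hy : (star y ⬝ᵥ y).re = ∑ i ∈ S, (deg ω i : ℝ) := by
      rw [star_indicator_dotProduct_indicator, Complex.re_sum]
      refine Finset.sum_congr rfl fun i _ => ?_
      rw [star_mul', mul_mul_mul_comm, hc_unit, mul_one, Complex.star_def, Complex.conj_ofReal,
        ← Complex.ofReal_mul, Real.mul_self_sqrt (Nat.cast_nonneg _), Complex.ofReal_re]
    rw [← hKx, ← hLy, ← hy]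
    exact lamMin_le_div_le_lamMax _ hL (hy ▸ Finset.sum_pos (fun i _ => Nat.cast_pos.2 (hdeg i)) hS)
end
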